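/- arXiv:1003.1469 — 2 statements merged into one kernel-verified Lean document; each statement's English description precedes it below -/
import Mathlib

section
/- Let n ≥ 3. For any torsion-free affine connection Γ on U, the divergence of the projective Weyl tensor determines the projective Cotton tensor: Σ_d ∇_d W^d_{abc} = (n−2) Y_{bca} for all a, b, c at every point of U; moreover the Cotton tensor satisfies Y_{[abc]} = 0, i.e. Y_{abc} + Y_{bca} + Y_{cab} = 0. -/
open scoped BigOperators

noncomputable section

/-- Partial derivative of `f` in the `b`-th coordinate direction at `x`. -/
def pd {n : ℕ} (b : Fin n) (f : (Fin n → ℝ) → ℝ) (x : Fin n → ℝ) : ℝ :=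
  fderiv ℝ f x (Pi.single b 1)

/-- Kronecker delta. -/
def kd {n : ℕ} (a b : Fin n) : ℝ := if a = b then 1 else 0

/-- A torsion-free affine connection on `U`, given by smooth coefficients `Γ^a_{bc}`,
symmetric in the lower indices. -/
def IsConn {n : ℕ} (U : Set (Fin n → ℝ))
    (Γ : Fin n → Fin n → Fin n → (Fin n → ℝ) → ℝ) : Prop :=
  (∀ a b c, ContDiffOn ℝ (⊤ : ℕ∞) (Γ a b c) U) ∧
  (∀ a b c, ∀ x ∈ U, Γ a b c x = Γ a c b x)

/-- Curvature tensor `R^a_{bcd}` of the connection `Γ`. -/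
def curv {n : ℕ} (Γ : Fin n → Fin n → Fin n → (Fin n → ℝ) → ℝ)
    (a b c d : Fin n) (x : Fin n → ℝ) : ℝ :=
  pd c (Γ a b d) x - pd d (Γ a b c) x
    + ∑ e, (Γ a e c x * Γ e b d x - Γ a e d x * Γ e b c x)

/-- Ricci tensor `R_{bd} = Σ_a R^a_{bad}`. -/
def ricci {n : ℕ} (Γ : Fin n → Fin n → Fin n → (Fin n → ℝ) → ℝ)
    (b d : Fin n) (x : Fin n → ℝ) : ℝ :=
  ∑ a, curv Γ a b a d x

/-- Projective Schouten tensor `P_{ab} = (1/(n-1)) R_{(ab)} - (1/(n+1)) R_{[ab]}`. -/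
def schouten {n : ℕ} (Γ : Fin n → Fin n → Fin n → (Fin n → ℝ) → ℝ)
    (a b : Fin n) (x : Fin n → ℝ) : ℝ :=
  (1/((n : ℝ) - 1)) * ((ricci Γ a b x + ricci Γ b a x)/2)
    - (1/((n : ℝ) + 1)) * ((ricci Γ a b x - ricci Γ b a x)/2)

/-- Projective Weyl tensor
`W^a_{bcd} = R^a_{bcd} - δ^a_c P_{db} + δ^a_d P_{cb} + 2 δ^a_b P_{[cd]}`. -/
def weyl {n : ℕ} (Γ : Fin n → Fin n → Fin n → (Fin n → ℝ) → ℝ)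
    (a b c d : Fin n) (x : Fin n → ℝ) : ℝ :=
  curv Γ a b c d x - kd a c * schouten Γ d b x + kd a d * schouten Γ c b x
    + 2 * kd a b * ((schouten Γ c d x - schouten Γ d c x)/2)

/-- Covariant derivative `∇_a P_{bc}` of the projective Schouten tensor. -/
def covSchouten {n : ℕ} (Γ : Fin n → Fin n → Fin n → (Fin n → ℝ) → ℝ)
    (a b c : Fin n) (x : Fin n → ℝ) : ℝ :=
  pd a (schouten Γ b c) x - (∑ e, Γ e b a x * schouten Γ e c x)
    - (∑ e, Γ e c a x * schouten Γ b e x)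

/-- Projective Cotton tensor `Y_{bca} = ∇_b P_{ca} - ∇_c P_{ba}`. -/
def cotton {n : ℕ} (Γ : Fin n → Fin n → Fin n → (Fin n → ℝ) → ℝ)
    (b c a : Fin n) (x : Fin n → ℝ) : ℝ :=
  covSchouten Γ b c a x - covSchouten Γ c b a x

/-- Covariant derivative `∇_e W^a_{bcd}` of the projective Weyl tensor. -/
def covWeyl {n : ℕ} (Γ : Fin n → Fin n → Fin n → (Fin n → ℝ) → ℝ)
    (e a b c d : Fin n) (x : Fin n → ℝ) : ℝ :=
  pd e (weyl Γ a b c d) x + (∑ f, Γ a f e x * weyl Γ f b c d x)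
    - (∑ f, Γ f b e x * weyl Γ a f c d x)
    - (∑ f, Γ f c e x * weyl Γ a b f d x)
    - (∑ f, Γ f d e x * weyl Γ a b c f x)

/-- Covariant derivative `∇_a Y_{bcd}` of the projective Cotton tensor. -/
def covCotton {n : ℕ} (Γ : Fin n → Fin n → Fin n → (Fin n → ℝ) → ℝ)
    (a b c d : Fin n) (x : Fin n → ℝ) : ℝ :=
  pd a (cotton Γ b c d) x - (∑ e, Γ e b a x * cotton Γ e c d x)
    - (∑ e, Γ e c a x * cotton Γ b e d x)
    - (∑ e, Γ e d a x * cotton Γ b c e x)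

/-- Covariant derivative `∇_a A_b` of a 1-form `A`. -/
def cov1 {n : ℕ} (Γ : Fin n → Fin n → Fin n → (Fin n → ℝ) → ℝ)
    (a b : Fin n) (A : Fin n → (Fin n → ℝ) → ℝ) (x : Fin n → ℝ) : ℝ :=
  pd a (A b) x - ∑ e, Γ e b a x * A e x

/-- Covariant derivative `∇_c g^{ab}` of a (2,0)-tensor `g`. -/
def covUp2 {n : ℕ} (Γ : Fin n → Fin n → Fin n → (Fin n → ℝ) → ℝ)
    (c a b : Fin n) (g : Fin n → Fin n → (Fin n → ℝ) → ℝ) (x : Fin n → ℝ) : ℝ :=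
  pd c (g a b) x + (∑ e, Γ a e c x * g e b x) + (∑ e, Γ b e c x * g a e x)

/-- Covariant derivative `∇_a μ^b` of a vector field `μ`. -/
def covVec {n : ℕ} (Γ : Fin n → Fin n → Fin n → (Fin n → ℝ) → ℝ)
    (a b : Fin n) (μ : Fin n → (Fin n → ℝ) → ℝ) (x : Fin n → ℝ) : ℝ :=
  pd a (μ b) x + ∑ e, Γ b e a x * μ e x

/-- A smooth pseudo-Riemannian metric on `U`: smooth, symmetric, and
nondegenerate at every point of `U`. -/
def IsMetric {n : ℕ} (U : Set (Fin n → ℝ))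
    (g : Fin n → Fin n → (Fin n → ℝ) → ℝ) : Prop :=
  (∀ a b, ContDiffOn ℝ (⊤ : ℕ∞) (g a b) U) ∧
  (∀ a b, ∀ x ∈ U, g a b x = g b a x) ∧
  (∀ x ∈ U, (Matrix.of fun a b => g a b x).det ≠ 0)

/-- Pointwise inverse `g^{ab}` of a metric (or pointwise matrix inverse of any
2-index field). -/
def minv {n : ℕ} (g : Fin n → Fin n → (Fin n → ℝ) → ℝ)
    (a b : Fin n) (x : Fin n → ℝ) : ℝ :=
  (Matrix.of fun i j => g i j x)⁻¹ a b

/-- Levi-Civita connection coefficients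
`Γ^a_{bc} = ½ Σ_d g^{ad}(∂_b g_{dc} + ∂_c g_{bd} - ∂_d g_{bc})` of a metric `g`. -/
def levicivita {n : ℕ} (g : Fin n → Fin n → (Fin n → ℝ) → ℝ)
    (a b c : Fin n) (x : Fin n → ℝ) : ℝ :=
  (1/2) * ∑ d, minv g a d x * (pd b (g d c) x + pd c (g b d) x - pd d (g b c) x)

/-- Ricci scalar `R = Σ_{a,b} g^{ab} R_{ab}` of a metric `g`. -/
def ricciScalar {n : ℕ} (g : Fin n → Fin n → (Fin n → ℝ) → ℝ)
    (x : Fin n → ℝ) : ℝ :=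
  ∑ a, ∑ b, minv g a b x * ricci (levicivita g) a b x

/-- Metric Schouten tensor `LCP_{ab} = (1/(n-2))(R_{ab} - R g_{ab}/(2(n-1)))`. -/
def lcSchouten {n : ℕ} (g : Fin n → Fin n → (Fin n → ℝ) → ℝ)
    (a b : Fin n) (x : Fin n → ℝ) : ℝ :=
  (1/((n : ℝ) - 2)) *
    (ricci (levicivita g) a b x - ricciScalar g x * g a b x / (2*((n : ℝ) - 1)))

/-- Metric (conformal) Weyl tensor of a metric `g`. -/
def lcWeyl {n : ℕ} (g : Fin n → Fin n → (Fin n → ℝ) → ℝ)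
    (a b c d : Fin n) (x : Fin n → ℝ) : ℝ :=
  curv (levicivita g) a b c d x - kd a c * lcSchouten g d b x
    + kd a d * lcSchouten g c b x
    - (∑ e, g b d x * minv g a e x * lcSchouten g e c x)
    + (∑ e, g b c x * minv g a e x * lcSchouten g e d x)

/-- `Γ'` is projectively equivalent to `Γ` on `U`:
`Γ'^a_{bc} = Γ^a_{bc} + δ^a_c A_b + δ^a_b A_c` for some smooth 1-form `A`. -/
def ProjEquiv {n : ℕ} (U : Set (Fin n → ℝ))
    (Γ' Γ : Fin n → Fin n → Fin n → (Fin n → ℝ) → ℝ) : Prop :=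
  ∃ A : Fin n → (Fin n → ℝ) → ℝ, (∀ a, ContDiffOn ℝ (⊤ : ℕ∞) (A a) U) ∧
    ∀ a b c, ∀ x ∈ U, Γ' a b c x = Γ a b c x + kd a c * A b x + kd a b * A c x

/-- A connection is special on `U` if its projective Schouten tensor is symmetric. -/
def IsSpecial {n : ℕ} (U : Set (Fin n → ℝ))
    (Γ : Fin n → Fin n → Fin n → (Fin n → ℝ) → ℝ) : Prop :=
  ∀ a b, ∀ x ∈ U, schouten Γ a b x = schouten Γ b a x

/-- A smooth symmetric (2,0)-tensor field on `U`. -/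
def SmoothSym2 {n : ℕ} (U : Set (Fin n → ℝ))
    (g : Fin n → Fin n → (Fin n → ℝ) → ℝ) : Prop :=
  (∀ a b, ContDiffOn ℝ (⊤ : ℕ∞) (g a b) U) ∧ (∀ a b, ∀ x ∈ U, g a b x = g b a x)

/-- The prolonged metrisability system (3.10) for `(g^{ab}, μ^a, ρ)`:
`∇_c g^{ab} = μ^a δ^b_c + μ^b δ^a_c`,
`∇_a μ^b = ρ δ^b_a - Σ_c P_{ac} g^{bc} - (1/n) Σ_{c,d} W^b_{cda} g^{cd}`,
`∇_a ρ = -2 Σ_b P_{ab} μ^b + (2/n) Σ_{b,c} Y_{abc} g^{bc}`. -/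
def ProlongedSys {n : ℕ} (U : Set (Fin n → ℝ))
    (Γ : Fin n → Fin n → Fin n → (Fin n → ℝ) → ℝ)
    (g : Fin n → Fin n → (Fin n → ℝ) → ℝ)
    (μ : Fin n → (Fin n → ℝ) → ℝ) (ρ : (Fin n → ℝ) → ℝ) : Prop :=
  (∀ a b c, ∀ x ∈ U, covUp2 Γ c a b g x = μ a x * kd b c + μ b x * kd a c) ∧
  (∀ a b, ∀ x ∈ U, covVec Γ a b μ x =
      ρ x * kd b a - (∑ c, schouten Γ a c x * g b c x)
        - (1/(n : ℝ)) * ∑ c, ∑ d, weyl Γ b c d a x * g c d x) ∧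
  (∀ a, ∀ x ∈ U, pd a ρ x =
      -2 * (∑ b, schouten Γ a b x * μ b x)
        + (2/(n : ℝ)) * ∑ b, ∑ c, cotton Γ a b c x * g b c x)

/-- The tensor `T_{[ed]}^{cb}{}_{af}` of Proposition 3.6 (eq. (3.12)). -/
def Ttensor {n : ℕ} (Γ : Fin n → Fin n → Fin n → (Fin n → ℝ) → ℝ)
    (e d c b a f : Fin n) (x : Fin n → ℝ) : ℝ :=
  (1/2) * ((kd c a * weyl Γ b f e d x + kd c f * weyl Γ b a e d x)/2)
  + (1/2) * ((kd b a * weyl Γ c f e d x + kd b f * weyl Γ c a e d x)/2)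
  + (1/(n : ℝ)) * ((((weyl Γ c a f e x + weyl Γ c f a e x)/2) * kd b d
      - ((weyl Γ c a f d x + weyl Γ c f a d x)/2) * kd b e)/2)
  + (1/(n : ℝ)) * ((((weyl Γ b a f e x + weyl Γ b f a e x)/2) * kd c d
      - ((weyl Γ b a f d x + weyl Γ b f a d x)/2) * kd c e)/2)

/-- The tensor `S_{[ae]}^b{}_{cd}` of Proposition 3.8. -/
def Stensor {n : ℕ} (Γ : Fin n → Fin n → Fin n → (Fin n → ℝ) → ℝ)
    (a e b c d : Fin n) (x : Fin n → ℝ) : ℝ :=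
  (((n : ℝ) - 2)/2) * ((cotton Γ e a c x * kd b d + cotton Γ e a d x * kd b c)/2)
  + (covWeyl Γ c b d e a x + covWeyl Γ d b c e a x)/2
  + (((covWeyl Γ a b c d e x + covWeyl Γ a b d c e x)/2)
      - ((covWeyl Γ e b c d a x + covWeyl Γ e b d c a x)/2))/2

/-- The tensor `U_{[ab]cd}` of Proposition 3.9. -/
def Utensor {n : ℕ} (Γ : Fin n → Fin n → Fin n → (Fin n → ℝ) → ℝ)
    (a b c d : Fin n) (x : Fin n → ℝ) : ℝ :=
  (((covCotton Γ a b c d x + covCotton Γ a b d c x)/2)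
      - ((covCotton Γ b a c d x + covCotton Γ b a d c x)/2))/2
  + ∑ e, (((weyl Γ e c d a x + weyl Γ e d c a x)/2) * schouten Γ b e x
      - ((weyl Γ e c d b x + weyl Γ e d c b x)/2) * schouten Γ a e x)/2

end
noncomputable section Aux

open Filter

variable {n : ℕ} {U : Set (Fin n → ℝ)} {x : Fin n → ℝ}
variable {f g : (Fin n → ℝ) → ℝ}

lemma pd_congr_nhds (h : f =ᶠ[nhds x] g) (b : Fin n) : pd b f x = pd b g x := by
  unfold pd; rw [h.fderiv_eq]

lemma pd_congr_on (hU : IsOpen U) (h : ∀ y ∈ U, f y = g y) (hx : x ∈ U) (b : Fin n) :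
    pd b f x = pd b g x :=
  pd_congr_nhds (eventuallyEq_of_mem (hU.mem_nhds hx) h) b

lemma diffAt (hU : IsOpen U) (hf : ContDiffOn ℝ (⊤ : ℕ∞) f U) (hx : x ∈ U) :
    DifferentiableAt ℝ f x :=
  (hf.contDiffAt (hU.mem_nhds hx)).differentiableAt (by simp)

lemma contDiffOn_pd (hU : IsOpen U) (hf : ContDiffOn ℝ (⊤ : ℕ∞) f U) (b : Fin n) :
    ContDiffOn ℝ (⊤ : ℕ∞) (pd b f) U := by
  have h := hf.fderiv_of_isOpen hU ENat.coe_top_add_one.le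
  exact h.clm_apply contDiffOn_const

lemma pd_add (hf : DifferentiableAt ℝ f x) (hg : DifferentiableAt ℝ g x) (b : Fin n) :
    pd b (fun y => f y + g y) x = pd b f x + pd b g x := by
  unfold pd; rw [fderiv_fun_add hf hg]; rfl

lemma pd_sub (hf : DifferentiableAt ℝ f x) (hg : DifferentiableAt ℝ g x) (b : Fin n) :
    pd b (fun y => f y - g y) x = pd b f x - pd b g x := by
  unfold pd; rw [fderiv_fun_sub hf hg]; rfl

lemma pd_neg (b : Fin n) : pd b (fun y => -f y) x = -pd b f x := by
  unfold pd; rw [fderiv_fun_neg]; rfl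

lemma pd_mul (hf : DifferentiableAt ℝ f x) (hg : DifferentiableAt ℝ g x) (b : Fin n) :
    pd b (fun y => f y * g y) x = f x * pd b g x + g x * pd b f x := by
  unfold pd; rw [fderiv_fun_mul hf hg]; rfl

lemma pd_const_mul (hf : DifferentiableAt ℝ f x) (c : ℝ) (b : Fin n) :
    pd b (fun y => c * f y) x = c * pd b f x := by
  unfold pd; rw [fderiv_const_mul hf]; rfl

lemma diffAt' {F : Type*} [NormedAddCommGroup F] [NormedSpace ℝ F]
    {f : (Fin n → ℝ) → F} (hU : IsOpen U) (hf : ContDiffOn ℝ (⊤ : ℕ∞) f U) (hx : x ∈ U) :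
    DifferentiableAt ℝ f x :=
  (hf.contDiffAt (hU.mem_nhds hx)).differentiableAt (by simp)

lemma pd_div_const (hf : DifferentiableAt ℝ f x) (c : ℝ) (b : Fin n) :
    pd b (fun y => f y / c) x = pd b f x / c := by
  unfold pd
  rw [show (fun y => f y / c) = fun y => f y * c⁻¹ from by funext y; rw [div_eq_mul_inv]]
  rw [fderiv_mul_const hf]
  simp [div_eq_mul_inv, mul_comm]

lemma pd_sum {ι : Type*} (s : Finset ι) (F : ι → (Fin n → ℝ) → ℝ)
    (h : ∀ i ∈ s, DifferentiableAt ℝ (F i) x) (b : Fin n) :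
    pd b (fun y => ∑ i ∈ s, F i y) x = ∑ i ∈ s, pd b (F i) x := by
  unfold pd; rw [fderiv_fun_sum h, ContinuousLinearMap.sum_apply]

lemma pd_pd_symm (hU : IsOpen U) (hf : ContDiffOn ℝ (⊤ : ℕ∞) f U) (hx : x ∈ U) (u v : Fin n) :
    pd u (pd v f) x = pd v (pd u f) x := by
  have hct : ContDiffAt ℝ (⊤ : ℕ∞) f x := hf.contDiffAt (hU.mem_nhds hx)
  have hsymm := hct.isSymmSndFDerivAt (by rw [minSmoothness_of_isRCLikeNormedField]; exact WithTop.coe_le_coe.mpr (le_top : (2:ℕ∞) ≤ ⊤))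
  have hd : DifferentiableAt ℝ (fderiv ℝ f) x :=
    diffAt' hU (hf.fderiv_of_isOpen hU ENat.coe_top_add_one.le) hx
  have key : ∀ w z : Fin n, pd w (pd z f) x
      = fderiv ℝ (fderiv ℝ f) x (Pi.single w 1) (Pi.single z 1) := by
    intro w z
    show fderiv ℝ (fun y => fderiv ℝ f y (Pi.single z 1)) x (Pi.single w 1) = _
    rw [fderiv_clm_apply hd (differentiableAt_const _)]
    simp
  rw [key, key, hsymm]

end Aux
noncomputable section Aux2

variable {n : ℕ} {U : Set (Fin n → ℝ)} {x : Fin n → ℝ}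
variable {Γ : Fin n → Fin n → Fin n → (Fin n → ℝ) → ℝ}

lemma cdo_curv (hU : IsOpen U) (hΓ : IsConn U Γ) (a b c d : Fin n) :
    ContDiffOn ℝ (⊤ : ℕ∞) (curv Γ a b c d) U := by
  have h1 := contDiffOn_pd hU (hΓ.1 a b d) c
  have h2 := contDiffOn_pd hU (hΓ.1 a b c) d
  have h3 : ContDiffOn ℝ (⊤ : ℕ∞) (fun y => ∑ e, (Γ a e c y * Γ e b d y - Γ a e d y * Γ e b c y)) U :=
    ContDiffOn.sum fun e _ => ((hΓ.1 a e c).mul (hΓ.1 e b d)).sub ((hΓ.1 a e d).mul (hΓ.1 e b c))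
  exact (h1.sub h2).add h3

lemma cdo_ricci (hU : IsOpen U) (hΓ : IsConn U Γ) (b d : Fin n) :
    ContDiffOn ℝ (⊤ : ℕ∞) (ricci Γ b d) U :=
  ContDiffOn.sum fun a _ => cdo_curv hU hΓ a b a d

lemma cdo_schouten (hU : IsOpen U) (hΓ : IsConn U Γ) (a b : Fin n) :
    ContDiffOn ℝ (⊤ : ℕ∞) (schouten Γ a b) U := by
  have h1 := cdo_ricci hU hΓ a b
  have h2 := cdo_ricci hU hΓ b a
  exact (contDiffOn_const.mul ((h1.add h2).div_const 2)).sub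
    (contDiffOn_const.mul ((h1.sub h2).div_const 2))

lemma dΓ (hU : IsOpen U) (hΓ : IsConn U Γ) (hx : x ∈ U) (a b c : Fin n) :
    DifferentiableAt ℝ (Γ a b c) x := diffAt hU (hΓ.1 a b c) hx

lemma dpdΓ (hU : IsOpen U) (hΓ : IsConn U Γ) (hx : x ∈ U) (e a b c : Fin n) :
    DifferentiableAt ℝ (pd e (Γ a b c)) x := diffAt hU (contDiffOn_pd hU (hΓ.1 a b c) e) hx

lemma d_curv (hU : IsOpen U) (hΓ : IsConn U Γ) (hx : x ∈ U) (a b c d : Fin n) :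
    DifferentiableAt ℝ (curv Γ a b c d) x := diffAt hU (cdo_curv hU hΓ a b c d) hx

lemma d_ricci (hU : IsOpen U) (hΓ : IsConn U Γ) (hx : x ∈ U) (b d : Fin n) :
    DifferentiableAt ℝ (ricci Γ b d) x := diffAt hU (cdo_ricci hU hΓ b d) hx

lemma d_schouten (hU : IsOpen U) (hΓ : IsConn U Γ) (hx : x ∈ U) (a b : Fin n) :
    DifferentiableAt ℝ (schouten Γ a b) x := diffAt hU (cdo_schouten hU hΓ a b) hx

lemma pd_curv (hU : IsOpen U) (hΓ : IsConn U Γ) (hx : x ∈ U) (e a b c d : Fin n) :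
    pd e (curv Γ a b c d) x
      = pd e (pd c (Γ a b d)) x - pd e (pd d (Γ a b c)) x
        + ∑ f, (Γ a f c x * pd e (Γ f b d) x + Γ f b d x * pd e (Γ a f c) x
            - (Γ a f d x * pd e (Γ f b c) x + Γ f b c x * pd e (Γ a f d) x)) := by
  have hq : ∀ f : Fin n, DifferentiableAt ℝ
      (fun y => Γ a f c y * Γ f b d y - Γ a f d y * Γ f b c y) x := fun f =>
    ((dΓ hU hΓ hx a f c).mul (dΓ hU hΓ hx f b d)).sub ((dΓ hU hΓ hx a f d).mul (dΓ hU hΓ hx f b c))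
  have hS : DifferentiableAt ℝ
      (fun y => ∑ f, (Γ a f c y * Γ f b d y - Γ a f d y * Γ f b c y)) x :=
    DifferentiableAt.fun_sum fun f _ => hq f
  rw [show curv Γ a b c d = fun y => (pd c (Γ a b d) y - pd d (Γ a b c) y)
      + ∑ f, (Γ a f c y * Γ f b d y - Γ a f d y * Γ f b c y) from rfl]
  rw [pd_add ((dpdΓ hU hΓ hx c a b d).fun_sub (dpdΓ hU hΓ hx d a b c)) hS e,
    pd_sub (dpdΓ hU hΓ hx c a b d) (dpdΓ hU hΓ hx d a b c) e,
    pd_sum _ _ (fun f _ => hq f) e]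
  congr 1
  refine Finset.sum_congr rfl fun f _ => ?_
  rw [pd_sub ((dΓ hU hΓ hx a f c).fun_mul (dΓ hU hΓ hx f b d))
      ((dΓ hU hΓ hx a f d).fun_mul (dΓ hU hΓ hx f b c)) e,
    pd_mul (dΓ hU hΓ hx a f c) (dΓ hU hΓ hx f b d) e,
    pd_mul (dΓ hU hΓ hx a f d) (dΓ hU hΓ hx f b c) e]

lemma pd_ricci (hU : IsOpen U) (hΓ : IsConn U Γ) (hx : x ∈ U) (e b d : Fin n) :
    pd e (ricci Γ b d) x = ∑ a, pd e (curv Γ a b a d) x := by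
  rw [show ricci Γ b d = fun y => ∑ a, curv Γ a b a d y from rfl,
    pd_sum _ _ (fun a _ => d_curv hU hΓ hx a b a d) e]

lemma pd_schouten (hU : IsOpen U) (hΓ : IsConn U Γ) (hx : x ∈ U) (e a b : Fin n) :
    pd e (schouten Γ a b) x
      = (1/((n : ℝ) - 1)) * ((pd e (ricci Γ a b) x + pd e (ricci Γ b a) x)/2)
        - (1/((n : ℝ) + 1)) * ((pd e (ricci Γ a b) x - pd e (ricci Γ b a) x)/2) := by
  have h1 := d_ricci hU hΓ hx a b
  have h2 := d_ricci hU hΓ hx b a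
  rw [show schouten Γ a b = fun y => (1/((n : ℝ) - 1)) * ((ricci Γ a b y + ricci Γ b a y)/2)
      - (1/((n : ℝ) + 1)) * ((ricci Γ a b y - ricci Γ b a y)/2) from rfl]
  rw [pd_sub (by fun_prop) (by fun_prop) e,
    pd_const_mul (by fun_prop) _ e,
    pd_const_mul (by fun_prop) _ e,
    pd_div_const (h1.fun_add h2) 2 e, pd_div_const (h1.fun_sub h2) 2 e,
    pd_add h1 h2 e, pd_sub h1 h2 e]

lemma pd_weyl (hU : IsOpen U) (hΓ : IsConn U Γ) (hx : x ∈ U) (u a b c d : Fin n) :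
    pd u (weyl Γ a b c d) x
      = pd u (curv Γ a b c d) x - kd a c * pd u (schouten Γ d b) x
        + kd a d * pd u (schouten Γ c b) x
        + 2 * kd a b * ((pd u (schouten Γ c d) x - pd u (schouten Γ d c) x)/2) := by
  have hc := d_curv hU hΓ hx a b c d
  have h1 := d_schouten hU hΓ hx d b
  have h2 := d_schouten hU hΓ hx c b
  have h3 := d_schouten hU hΓ hx c d
  have h4 := d_schouten hU hΓ hx d c
  rw [show weyl Γ a b c d = fun y => curv Γ a b c d y - kd a c * schouten Γ d b y
      + kd a d * schouten Γ c b y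
      + 2 * kd a b * ((schouten Γ c d y - schouten Γ d c y)/2) from rfl]
  rw [pd_add (by fun_prop) (by fun_prop) u, pd_add (by fun_prop) (by fun_prop) u,
    pd_sub hc (by fun_prop) u, pd_const_mul h1 _ u, pd_const_mul h2 _ u,
    pd_const_mul (by fun_prop) _ u, pd_div_const (h3.fun_sub h4) 2 u,
    pd_sub h3 h4 u]

lemma curv_antisymm (y : Fin n → ℝ) (a b c d : Fin n) :
    curv Γ a b c d y = -curv Γ a b d c y := by
  simp only [curv]
  rw [show (∑ e, (Γ a e d y * Γ e b c y - Γ a e c y * Γ e b d y))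
      = -∑ e, (Γ a e c y * Γ e b d y - Γ a e d y * Γ e b c y) from by
    rw [← Finset.sum_neg_distrib]; exact Finset.sum_congr rfl fun e _ => by ring]
  ring

lemma Gsym (hΓ : IsConn U Γ) (hx : x ∈ U) (a b c : Fin n) : Γ a b c x = Γ a c b x :=
  hΓ.2 a b c x hx

lemma Dsym (hU : IsOpen U) (hΓ : IsConn U Γ) (hx : x ∈ U) (e a b c : Fin n) :
    pd e (Γ a b c) x = pd e (Γ a c b) x :=
  pd_congr_on hU (fun y hy => hΓ.2 a b c y hy) hx e

lemma DDsym (hU : IsOpen U) (hΓ : IsConn U Γ) (hx : x ∈ U) (u v a b c : Fin n) :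
    pd u (pd v (Γ a b c)) x = pd v (pd u (Γ a b c)) x :=
  pd_pd_symm hU (hΓ.1 a b c) hx u v

lemma kd_mul_sum (F : Fin n → ℝ) (b : Fin n) : (∑ d, kd d b * F d) = F b := by
  simp [kd, ite_mul, Finset.sum_ite_eq']

lemma kd_mul_sum' (F : Fin n → ℝ) (b : Fin n) : (∑ d, kd b d * F d) = F b := by
  simp [kd, ite_mul, Finset.sum_ite_eq]

end Aux2
noncomputable section Aux3

variable {n : ℕ} {U : Set (Fin n → ℝ)} {x : Fin n → ℝ}
variable {Γ : Fin n → Fin n → Fin n → (Fin n → ℝ) → ℝ}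

/-- trace of the connection: `γ_b = Γ^a_{ba}`. -/
def trG (Γ : Fin n → Fin n → Fin n → (Fin n → ℝ) → ℝ) (b : Fin n) : (Fin n → ℝ) → ℝ :=
  fun y => ∑ a, Γ a b a y

lemma cdo_trG (hΓ : IsConn U Γ) (b : Fin n) : ContDiffOn ℝ (⊤ : ℕ∞) (trG Γ b) U :=
  ContDiffOn.sum fun a _ => hΓ.1 a b a

lemma pd_trG (hU : IsOpen U) (hΓ : IsConn U Γ) (hx : x ∈ U) (c b : Fin n) :
    pd c (trG Γ b) x = ∑ a, pd c (Γ a b a) x :=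
  pd_sum _ _ (fun a _ => dΓ hU hΓ hx a b a) c

lemma ricci_expand (y : Fin n → ℝ) (b c : Fin n) :
    ricci Γ b c y = ∑ a, pd a (Γ a b c) y - ∑ a, pd c (Γ a b a) y
      + ((∑ a, ∑ e, Γ a e a y * Γ e b c y) - ∑ a, ∑ e, Γ a e c y * Γ e b a y) := by
  simp only [ricci, curv, Finset.sum_add_distrib, Finset.sum_sub_distrib]

lemma ricci_antisym (hU : IsOpen U) (hΓ : IsConn U Γ) {y : Fin n → ℝ} (hy : y ∈ U)
    (b c : Fin n) :
    ricci Γ b c y - ricci Γ c b y = pd b (trG Γ c) y - pd c (trG Γ b) y := by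
  have h1 : (∑ a, pd a (Γ a b c) y) = ∑ a, pd a (Γ a c b) y :=
    Finset.sum_congr rfl fun a _ => Dsym hU hΓ hy a a b c
  have h2 : (∑ a, ∑ e, Γ a e a y * Γ e b c y) = ∑ a, ∑ e, Γ a e a y * Γ e c b y :=
    Finset.sum_congr rfl fun a _ => Finset.sum_congr rfl fun e _ => by
      rw [Gsym hΓ hy e b c]
  have h3 : (∑ a, ∑ e, Γ a e c y * Γ e b a y) = ∑ a, ∑ e, Γ a e b y * Γ e c a y := by
    rw [Finset.sum_comm]
    exact Finset.sum_congr rfl fun u _ => Finset.sum_congr rfl fun v _ => by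
      rw [Gsym hΓ hy v u c, Gsym hΓ hy u b v]; ring
  rw [ricci_expand y b c, ricci_expand y c b, pd_trG hU hΓ hy b c, pd_trG hU hΓ hy c b]
  linear_combination h1 + h2 - h3

lemma pd_ricci_antisym (hU : IsOpen U) (hΓ : IsConn U Γ) (hx : x ∈ U) (u v w : Fin n) :
    pd u (ricci Γ v w) x - pd u (ricci Γ w v) x
      = pd u (pd v (trG Γ w)) x - pd u (pd w (trG Γ v)) x := by
  have d1 := d_ricci hU hΓ hx v w
  have d2 := d_ricci hU hΓ hx w v
  have d3 : DifferentiableAt ℝ (pd v (trG Γ w)) x :=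
    diffAt hU (contDiffOn_pd hU (cdo_trG hΓ w) v) hx
  have d4 : DifferentiableAt ℝ (pd w (trG Γ v)) x :=
    diffAt hU (contDiffOn_pd hU (cdo_trG hΓ v) w) hx
  rw [← pd_sub d1 d2 u, ← pd_sub d3 d4 u]
  exact pd_congr_on hU (fun y hy => ricci_antisym hU hΓ hy v w) hx u

lemma cotton_cyclic (hU : IsOpen U) (hΓ : IsConn U Γ) (hx : x ∈ U) (a b c : Fin n) :
    cotton Γ a b c x + cotton Γ b c a x + cotton Γ c a b x = 0 := by
  have A1 : (∑ e, Γ e a b x * schouten Γ e c x) = ∑ e, Γ e b a x * schouten Γ e c x :=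
    Finset.sum_congr rfl fun e _ => by rw [Gsym hΓ hx e a b]
  have A2 : (∑ e, Γ e a c x * schouten Γ b e x) = ∑ e, Γ e c a x * schouten Γ b e x :=
    Finset.sum_congr rfl fun e _ => by rw [Gsym hΓ hx e a c]
  have A3 : (∑ e, Γ e b c x * schouten Γ a e x) = ∑ e, Γ e c b x * schouten Γ a e x :=
    Finset.sum_congr rfl fun e _ => by rw [Gsym hΓ hx e b c]
  have A4 : (∑ e, Γ e b c x * schouten Γ e a x) = ∑ e, Γ e c b x * schouten Γ e a x :=
    Finset.sum_congr rfl fun e _ => by rw [Gsym hΓ hx e b c]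
  have A5 : (∑ e, Γ e b a x * schouten Γ c e x) = ∑ e, Γ e a b x * schouten Γ c e x :=
    Finset.sum_congr rfl fun e _ => by rw [Gsym hΓ hx e b a]
  have A6 : (∑ e, Γ e c a x * schouten Γ e b x) = ∑ e, Γ e a c x * schouten Γ e b x :=
    Finset.sum_congr rfl fun e _ => by rw [Gsym hΓ hx e c a]
  have k1 := pd_ricci_antisym hU hΓ hx a b c
  have k2 := pd_ricci_antisym hU hΓ hx b c a
  have k3 := pd_ricci_antisym hU hΓ hx c a b
  have cl1 := pd_pd_symm hU (cdo_trG hΓ c) hx a b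
  have cl2 := pd_pd_symm hU (cdo_trG hΓ a) hx b c
  have cl3 := pd_pd_symm hU (cdo_trG hΓ b) hx c a
  simp only [cotton, covSchouten]
  rw [pd_schouten hU hΓ hx a b c, pd_schouten hU hΓ hx b a c, pd_schouten hU hΓ hx b c a,
    pd_schouten hU hΓ hx c b a, pd_schouten hU hΓ hx c a b, pd_schouten hU hΓ hx a c b]
  linear_combination A1 + A2 - A3 + A4 + A5 + A6
    + (-(1/((n:ℝ)+1))) * (k1 + k2 + k3 + cl1 + cl2 + cl3)

end Aux3
noncomputable section Aux4

variable {n : ℕ} {U : Set (Fin n → ℝ)} {x : Fin n → ℝ}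
variable {Γ : Fin n → Fin n → Fin n → (Fin n → ℝ) → ℝ}

/-- Coordinate covariant derivative of the curvature tensor. -/
def covCurvD (Γ : Fin n → Fin n → Fin n → (Fin n → ℝ) → ℝ)
    (e a b c d : Fin n) (x : Fin n → ℝ) : ℝ :=
  pd e (curv Γ a b c d) x + (∑ f, Γ a f e x * curv Γ f b c d x)
    - (∑ f, Γ f b e x * curv Γ a f c d x)
    - (∑ f, Γ f c e x * curv Γ a b f d x)
    - (∑ f, Γ f d e x * curv Γ a b c f x)

/-- Coordinate covariant derivative of the Ricci tensor. -/
def covRicciD (Γ : Fin n → Fin n → Fin n → (Fin n → ℝ) → ℝ)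
    (e b d : Fin n) (x : Fin n → ℝ) : ℝ :=
  pd e (ricci Γ b d) x - (∑ f, Γ f b e x * ricci Γ f d x)
    - (∑ f, Γ f d e x * ricci Γ b f x)

lemma sum_mul_curv_expand (P : Fin n → ℝ) (A B C D : Fin n → Fin n) (x : Fin n → ℝ) :
    (∑ f, P f * curv Γ (A f) (B f) (C f) (D f) x)
      = (∑ f, P f * (pd (C f) (Γ (A f) (B f) (D f)) x - pd (D f) (Γ (A f) (B f) (C f)) x))
        + ∑ f, ∑ g, P f * (Γ (A f) g (C f) x * Γ g (B f) (D f) x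
            - Γ (A f) g (D f) x * Γ g (B f) (C f) x) := by
  rw [← Finset.sum_add_distrib]
  exact Finset.sum_congr rfl fun f _ => by
    simp only [curv]; rw [← Finset.mul_sum]; ring

lemma second_bianchi (hU : IsOpen U) (hΓ : IsConn U Γ) (hx : x ∈ U) (a b c d e : Fin n) :
    covCurvD Γ e a b c d x + covCurvD Γ c a b d e x + covCurvD Γ d a b e c x = 0 := by
  have q1 := DDsym hU hΓ hx e c a b d
  have q2 := DDsym hU hΓ hx d e a b c
  have q3 := DDsym hU hΓ hx c d a b e
  have hsingle :
      (∑ f, (Γ a f c x * pd e (Γ f b d) x + Γ f b d x * pd e (Γ a f c) x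
          - (Γ a f d x * pd e (Γ f b c) x + Γ f b c x * pd e (Γ a f d) x)))
      + (∑ f, (Γ a f d x * pd c (Γ f b e) x + Γ f b e x * pd c (Γ a f d) x
          - (Γ a f e x * pd c (Γ f b d) x + Γ f b d x * pd c (Γ a f e) x)))
      + (∑ f, (Γ a f e x * pd d (Γ f b c) x + Γ f b c x * pd d (Γ a f e) x
          - (Γ a f c x * pd d (Γ f b e) x + Γ f b e x * pd d (Γ a f c) x)))
      + (∑ f, Γ a f e x * (pd c (Γ f b d) x - pd d (Γ f b c) x))
      + (∑ f, Γ a f c x * (pd d (Γ f b e) x - pd e (Γ f b d) x))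
      + (∑ f, Γ a f d x * (pd e (Γ f b c) x - pd c (Γ f b e) x))
      - (∑ f, Γ f b e x * (pd c (Γ a f d) x - pd d (Γ a f c) x))
      - (∑ f, Γ f b c x * (pd d (Γ a f e) x - pd e (Γ a f d) x))
      - (∑ f, Γ f b d x * (pd e (Γ a f c) x - pd c (Γ a f e) x))
      - (∑ f, Γ f c e x * (pd f (Γ a b d) x - pd d (Γ a b f) x))
      - (∑ f, Γ f d c x * (pd f (Γ a b e) x - pd e (Γ a b f) x))
      - (∑ f, Γ f e d x * (pd f (Γ a b c) x - pd c (Γ a b f) x))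
      - (∑ f, Γ f d e x * (pd c (Γ a b f) x - pd f (Γ a b c) x))
      - (∑ f, Γ f e c x * (pd d (Γ a b f) x - pd f (Γ a b d) x))
      - (∑ f, Γ f c d x * (pd e (Γ a b f) x - pd f (Γ a b e) x)) = 0 := by
    simp only [← Finset.sum_add_distrib, ← Finset.sum_sub_distrib]
    refine Finset.sum_eq_zero fun f _ => ?_
    rw [Gsym hΓ hx f e c, Gsym hΓ hx f e d, Gsym hΓ hx f d c]
    ring
  have w1 : (∑ f, ∑ g, Γ f b e x * (Γ a g c x * Γ g f d x - Γ a g d x * Γ g f c x))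
      = ∑ f, ∑ g, Γ g b e x * (Γ a f c x * Γ f g d x - Γ a f d x * Γ f g c x) :=
    Finset.sum_comm ..
  have w2 : (∑ f, ∑ g, Γ f b c x * (Γ a g d x * Γ g f e x - Γ a g e x * Γ g f d x))
      = ∑ f, ∑ g, Γ g b c x * (Γ a f d x * Γ f g e x - Γ a f e x * Γ f g d x) :=
    Finset.sum_comm ..
  have w3 : (∑ f, ∑ g, Γ f b d x * (Γ a g e x * Γ g f c x - Γ a g c x * Γ g f e x))
      = ∑ f, ∑ g, Γ g b d x * (Γ a f e x * Γ f g c x - Γ a f c x * Γ f g e x) :=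
    Finset.sum_comm ..
  have hdouble :
      (∑ f, ∑ g, Γ a f e x * (Γ f g c x * Γ g b d x - Γ f g d x * Γ g b c x))
      + (∑ f, ∑ g, Γ a f c x * (Γ f g d x * Γ g b e x - Γ f g e x * Γ g b d x))
      + (∑ f, ∑ g, Γ a f d x * (Γ f g e x * Γ g b c x - Γ f g c x * Γ g b e x))
      - (∑ f, ∑ g, Γ f b e x * (Γ a g c x * Γ g f d x - Γ a g d x * Γ g f c x))
      - (∑ f, ∑ g, Γ f b c x * (Γ a g d x * Γ g f e x - Γ a g e x * Γ g f d x))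
      - (∑ f, ∑ g, Γ f b d x * (Γ a g e x * Γ g f c x - Γ a g c x * Γ g f e x))
      - (∑ f, ∑ g, Γ f c e x * (Γ a g f x * Γ g b d x - Γ a g d x * Γ g b f x))
      - (∑ f, ∑ g, Γ f d c x * (Γ a g f x * Γ g b e x - Γ a g e x * Γ g b f x))
      - (∑ f, ∑ g, Γ f e d x * (Γ a g f x * Γ g b c x - Γ a g c x * Γ g b f x))
      - (∑ f, ∑ g, Γ f d e x * (Γ a g c x * Γ g b f x - Γ a g f x * Γ g b c x))
      - (∑ f, ∑ g, Γ f e c x * (Γ a g d x * Γ g b f x - Γ a g f x * Γ g b d x))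
      - (∑ f, ∑ g, Γ f c d x * (Γ a g e x * Γ g b f x - Γ a g f x * Γ g b e x)) = 0 := by
    rw [w1, w2, w3]
    simp only [← Finset.sum_add_distrib, ← Finset.sum_sub_distrib]
    refine Finset.sum_eq_zero fun f _ => Finset.sum_eq_zero fun g _ => ?_
    rw [Gsym hΓ hx f e c, Gsym hΓ hx f e d, Gsym hΓ hx f d c]
    ring
  simp only [covCurvD]
  rw [pd_curv hU hΓ hx e a b c d, pd_curv hU hΓ hx c a b d e, pd_curv hU hΓ hx d a b e c]
  simp only [sum_mul_curv_expand]
  linear_combination q1 + q2 + q3 + hsingle + hdouble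

end Aux4
noncomputable section Aux5

variable {n : ℕ} {U : Set (Fin n → ℝ)} {x : Fin n → ℝ}
variable {Γ : Fin n → Fin n → Fin n → (Fin n → ℝ) → ℝ}

lemma sum_curv_last (b d : Fin n) (x : Fin n → ℝ) :
    (∑ a, curv Γ a b d a x) = -ricci Γ b d x := by
  rw [show ricci Γ b d x = ∑ a, curv Γ a b a d x from rfl, ← Finset.sum_neg_distrib]
  exact Finset.sum_congr rfl fun a _ => curv_antisymm x a b d a

lemma contracted_bianchi (hU : IsOpen U) (hΓ : IsConn U Γ) (hx : x ∈ U) (b c d : Fin n) :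
    (∑ a, covCurvD Γ a a b c d x) = covRicciD Γ c b d x - covRicciD Γ d b c x := by
  have h0 : (∑ a, (covCurvD Γ a a b c d x + covCurvD Γ c a b d a x
      + covCurvD Γ d a b a c x)) = 0 :=
    Finset.sum_eq_zero fun a _ => second_bianchi hU hΓ hx a b c d a
  simp only [Finset.sum_add_distrib] at h0
  -- piece for ∇_c
  have p1 : (∑ a, pd c (curv Γ a b d a) x) = -pd c (ricci Γ b d) x := by
    rw [pd_ricci hU hΓ hx c b d, ← Finset.sum_neg_distrib]
    exact Finset.sum_congr rfl fun a _ => by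
      rw [show curv Γ a b d a = fun y => -curv Γ a b a d y from
        funext fun y => curv_antisymm y a b d a, pd_neg]
  have p2 : (∑ a, ∑ f, Γ f a c x * curv Γ a b d f x)
      = ∑ a, ∑ f, Γ a f c x * curv Γ f b d a x := Finset.sum_comm ..
  have p3 : (∑ a, ∑ f, Γ f b c x * curv Γ a f d a x)
      = -∑ f, Γ f b c x * ricci Γ f d x := by
    rw [Finset.sum_comm, ← Finset.sum_neg_distrib]
    refine Finset.sum_congr rfl fun f _ => ?_
    rw [← Finset.mul_sum, sum_curv_last]; ring
  have p4 : (∑ a, ∑ f, Γ f d c x * curv Γ a b f a x)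
      = -∑ f, Γ f d c x * ricci Γ b f x := by
    rw [Finset.sum_comm, ← Finset.sum_neg_distrib]
    refine Finset.sum_congr rfl fun f _ => ?_
    rw [← Finset.mul_sum, sum_curv_last]; ring
  have hA : (∑ a, covCurvD Γ c a b d a x) = -covRicciD Γ c b d x := by
    simp only [covCurvD, Finset.sum_add_distrib, Finset.sum_sub_distrib, covRicciD]
    linear_combination p1 - p2 - p3 - p4
  -- piece for ∇_d
  have r1 : (∑ a, pd d (curv Γ a b a c) x) = pd d (ricci Γ b c) x :=
    (pd_ricci hU hΓ hx d b c).symm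
  have r2 : (∑ a, ∑ f, Γ f a d x * curv Γ a b f c x)
      = ∑ a, ∑ f, Γ a f d x * curv Γ f b a c x := Finset.sum_comm ..
  have r3 : (∑ a, ∑ f, Γ f b d x * curv Γ a f a c x)
      = ∑ f, Γ f b d x * ricci Γ f c x := by
    rw [Finset.sum_comm]
    exact Finset.sum_congr rfl fun f _ => by rw [← Finset.mul_sum]; rfl
  have r4 : (∑ a, ∑ f, Γ f c d x * curv Γ a b a f x)
      = ∑ f, Γ f c d x * ricci Γ b f x := by
    rw [Finset.sum_comm]
    exact Finset.sum_congr rfl fun f _ => by rw [← Finset.mul_sum]; rfl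
  have hB : (∑ a, covCurvD Γ d a b a c x) = covRicciD Γ d b c x := by
    simp only [covCurvD, Finset.sum_add_distrib, Finset.sum_sub_distrib, covRicciD]
    linear_combination r1 - r2 - r3 - r4
  linarith [h0, hA, hB]

end Aux5
noncomputable section Aux6

variable {n : ℕ} {U : Set (Fin n → ℝ)} {x : Fin n → ℝ}
variable {Γ : Fin n → Fin n → Fin n → (Fin n → ℝ) → ℝ}

lemma ricci_sch (hn : 3 ≤ n) (b d : Fin n) (y : Fin n → ℝ) :
    ricci Γ b d y = n * schouten Γ d b y - schouten Γ b d y := by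
  have h1 : ((n : ℝ) - 1) ≠ 0 := by
    have : (3 : ℝ) ≤ (n : ℝ) := by exact_mod_cast hn
    linarith
  have h2 : ((n : ℝ) + 1) ≠ 0 := by positivity
  simp only [schouten]
  field_simp
  ring

lemma covRicci_covSch (hn : 3 ≤ n) (hU : IsOpen U) (hΓ : IsConn U Γ) (hx : x ∈ U)
    (e b d : Fin n) :
    covRicciD Γ e b d x = n * covSchouten Γ e d b x - covSchouten Γ e b d x := by
  have h1 : ((n : ℝ) - 1) ≠ 0 := by
    have : (3 : ℝ) ≤ (n : ℝ) := by exact_mod_cast hn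
    linarith
  have h2 : ((n : ℝ) + 1) ≠ 0 := by positivity
  have pdpart : pd e (ricci Γ b d) x
      = n * pd e (schouten Γ d b) x - pd e (schouten Γ b d) x := by
    rw [pd_schouten hU hΓ hx e d b, pd_schouten hU hΓ hx e b d]
    field_simp
    ring
  have hgb : (∑ f, Γ f b e x * ricci Γ f d x)
      = n * (∑ f, Γ f b e x * schouten Γ d f x) - ∑ f, Γ f b e x * schouten Γ f d x := by
    rw [Finset.mul_sum, ← Finset.sum_sub_distrib]
    exact Finset.sum_congr rfl fun f _ => by rw [ricci_sch hn f d x]; ring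
  have hgd : (∑ f, Γ f d e x * ricci Γ b f x)
      = n * (∑ f, Γ f d e x * schouten Γ f b x) - ∑ f, Γ f d e x * schouten Γ b f x := by
    rw [Finset.mul_sum, ← Finset.sum_sub_distrib]
    exact Finset.sum_congr rfl fun f _ => by rw [ricci_sch hn b f x]; ring
  simp only [covRicciD, covSchouten]
  linear_combination pdpart - hgb - hgd

end Aux6
noncomputable section Aux7

variable {n : ℕ} {U : Set (Fin n → ℝ)} {x : Fin n → ℝ}
variable {Γ : Fin n → Fin n → Fin n → (Fin n → ℝ) → ℝ}

lemma covWeyl_contract (hU : IsOpen U) (hΓ : IsConn U Γ) (hx : x ∈ U) (a b c : Fin n) :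
    (∑ d, covWeyl Γ d d a b c x)
      = (∑ d, covCurvD Γ d d a b c x)
        - covSchouten Γ b c a x + covSchouten Γ c b a x
        + covSchouten Γ a b c x - covSchouten Γ a c b x := by
  have W0 : (∑ d, pd d (weyl Γ d a b c) x)
      = (∑ d, pd d (curv Γ d a b c) x)
        - pd b (schouten Γ c a) x + pd c (schouten Γ b a) x
        + (pd a (schouten Γ b c) x - pd a (schouten Γ c b) x) := by
    rw [show (∑ d, pd d (weyl Γ d a b c) x)
        = ∑ d, (pd d (curv Γ d a b c) x - kd d b * pd d (schouten Γ c a) x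
          + kd d c * pd d (schouten Γ b a) x
          + (kd d a * pd d (schouten Γ b c) x - kd d a * pd d (schouten Γ c b) x)) from
      Finset.sum_congr rfl fun d _ => by rw [pd_weyl hU hΓ hx d d a b c]; ring]
    simp only [Finset.sum_add_distrib, Finset.sum_sub_distrib, kd_mul_sum]
  have W1 : (∑ d, ∑ f, Γ d f d x * weyl Γ f a b c x)
      = (∑ d, ∑ f, Γ d f d x * curv Γ f a b c x)
        - (∑ d, Γ d b d x * schouten Γ c a x) + (∑ d, Γ d c d x * schouten Γ b a x)
        + ((∑ d, Γ d a d x * schouten Γ b c x) - ∑ d, Γ d a d x * schouten Γ c b x) := by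
    rw [show (∑ d, ∑ f, Γ d f d x * weyl Γ f a b c x)
        = ∑ d, ((∑ f, Γ d f d x * curv Γ f a b c x)
          - Γ d b d x * schouten Γ c a x + Γ d c d x * schouten Γ b a x
          + (Γ d a d x * schouten Γ b c x - Γ d a d x * schouten Γ c b x)) from
      Finset.sum_congr rfl fun d _ => by
        rw [show (∑ f, Γ d f d x * weyl Γ f a b c x)
            = ∑ f, (Γ d f d x * curv Γ f a b c x
              - kd f b * (Γ d f d x * schouten Γ c a x)
              + kd f c * (Γ d f d x * schouten Γ b a x)
              + (kd f a * (Γ d f d x * schouten Γ b c x)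
                - kd f a * (Γ d f d x * schouten Γ c b x))) from
          Finset.sum_congr rfl fun f _ => by simp only [weyl]; ring]
        simp only [Finset.sum_add_distrib, Finset.sum_sub_distrib, kd_mul_sum]]
    simp only [Finset.sum_add_distrib, Finset.sum_sub_distrib]
  have W2 : (∑ d, ∑ f, Γ f a d x * weyl Γ d f b c x)
      = (∑ d, ∑ f, Γ f a d x * curv Γ d f b c x)
        - (∑ f, Γ f a b x * schouten Γ c f x) + (∑ f, Γ f a c x * schouten Γ b f x)
        + ((∑ d, Γ d a d x * schouten Γ b c x) - ∑ d, Γ d a d x * schouten Γ c b x) := by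
    rw [show (∑ d, ∑ f, Γ f a d x * weyl Γ d f b c x)
        = ∑ d, ((∑ f, Γ f a d x * curv Γ d f b c x)
          - kd d b * (∑ f, Γ f a d x * schouten Γ c f x)
          + kd d c * (∑ f, Γ f a d x * schouten Γ b f x)
          + (Γ d a d x * schouten Γ b c x - Γ d a d x * schouten Γ c b x)) from
      Finset.sum_congr rfl fun d _ => by
        rw [show (∑ f, Γ f a d x * weyl Γ d f b c x)
            = ∑ f, (Γ f a d x * curv Γ d f b c x
              - kd d b * (Γ f a d x * schouten Γ c f x)
              + kd d c * (Γ f a d x * schouten Γ b f x)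
              + (kd d f * (Γ f a d x * schouten Γ b c x)
                - kd d f * (Γ f a d x * schouten Γ c b x))) from
          Finset.sum_congr rfl fun f _ => by simp only [weyl]; ring]
        simp only [Finset.sum_add_distrib, Finset.sum_sub_distrib, kd_mul_sum',
          ← Finset.mul_sum]]
    simp only [Finset.sum_add_distrib, Finset.sum_sub_distrib, kd_mul_sum]
  have W3 : (∑ d, ∑ f, Γ f b d x * weyl Γ d a f c x)
      = (∑ d, ∑ f, Γ f b d x * curv Γ d a f c x)
        - (∑ d, Γ d b d x * schouten Γ c a x) + (∑ f, Γ f b c x * schouten Γ f a x)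
        + ((∑ f, Γ f b a x * schouten Γ f c x) - ∑ f, Γ f b a x * schouten Γ c f x) := by
    rw [show (∑ d, ∑ f, Γ f b d x * weyl Γ d a f c x)
        = ∑ d, ((∑ f, Γ f b d x * curv Γ d a f c x)
          - Γ d b d x * schouten Γ c a x
          + kd d c * (∑ f, Γ f b d x * schouten Γ f a x)
          + (kd d a * (∑ f, Γ f b d x * schouten Γ f c x)
            - kd d a * (∑ f, Γ f b d x * schouten Γ c f x))) from
      Finset.sum_congr rfl fun d _ => by
        rw [show (∑ f, Γ f b d x * weyl Γ d a f c x)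
            = ∑ f, (Γ f b d x * curv Γ d a f c x
              - kd d f * (Γ f b d x * schouten Γ c a x)
              + kd d c * (Γ f b d x * schouten Γ f a x)
              + (kd d a * (Γ f b d x * schouten Γ f c x)
                - kd d a * (Γ f b d x * schouten Γ c f x))) from
          Finset.sum_congr rfl fun f _ => by simp only [weyl]; ring]
        simp only [Finset.sum_add_distrib, Finset.sum_sub_distrib, kd_mul_sum',
          ← Finset.mul_sum]]
    simp only [Finset.sum_add_distrib, Finset.sum_sub_distrib, kd_mul_sum]
  have W4 : (∑ d, ∑ f, Γ f c d x * weyl Γ d a b f x)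
      = (∑ d, ∑ f, Γ f c d x * curv Γ d a b f x)
        - (∑ f, Γ f c b x * schouten Γ f a x) + (∑ d, Γ d c d x * schouten Γ b a x)
        + ((∑ f, Γ f c a x * schouten Γ b f x) - ∑ f, Γ f c a x * schouten Γ f b x) := by
    rw [show (∑ d, ∑ f, Γ f c d x * weyl Γ d a b f x)
        = ∑ d, ((∑ f, Γ f c d x * curv Γ d a b f x)
          - kd d b * (∑ f, Γ f c d x * schouten Γ f a x)
          + Γ d c d x * schouten Γ b a x
          + (kd d a * (∑ f, Γ f c d x * schouten Γ b f x)
            - kd d a * (∑ f, Γ f c d x * schouten Γ f b x))) from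
      Finset.sum_congr rfl fun d _ => by
        rw [show (∑ f, Γ f c d x * weyl Γ d a b f x)
            = ∑ f, (Γ f c d x * curv Γ d a b f x
              - kd d b * (Γ f c d x * schouten Γ f a x)
              + kd d f * (Γ f c d x * schouten Γ b a x)
              + (kd d a * (Γ f c d x * schouten Γ b f x)
                - kd d a * (Γ f c d x * schouten Γ f b x))) from
          Finset.sum_congr rfl fun f _ => by simp only [weyl]; ring]
        simp only [Finset.sum_add_distrib, Finset.sum_sub_distrib, kd_mul_sum',
          ← Finset.mul_sum]]
    simp only [Finset.sum_add_distrib, Finset.sum_sub_distrib, kd_mul_sum]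
  simp only [covWeyl, covCurvD, covSchouten, Finset.sum_add_distrib, Finset.sum_sub_distrib]
  linear_combination W0 + W1 - W2 - W3 - W4

end Aux7

/-- For `n ≥ 3`, the divergence of the projective Weyl tensor determines
the projective Cotton tensor, `Σ_d ∇_d W^d_{abc} = (n-2) Y_{bca}`, and `Y_{[abc]} = 0`. -/
theorem weyl_divergence_cotton {n : ℕ} (hn : 3 ≤ n)
    (U : Set (Fin n → ℝ)) (hUo : IsOpen U) (hUne : U.Nonempty)
    (Γ : Fin n → Fin n → Fin n → (Fin n → ℝ) → ℝ) (hΓ : IsConn U Γ) :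
    ∀ x ∈ U, ∀ a b c : Fin n,
      (∑ d, covWeyl Γ d d a b c x) = ((n : ℝ) - 2) * cotton Γ b c a x ∧
      cotton Γ a b c x + cotton Γ b c a x + cotton Γ c a b x = 0 := by
  intro x hx a b c
  have cycl := cotton_cyclic hUo hΓ hx a b c
  refine ⟨?_, cycl⟩
  rw [covWeyl_contract hUo hΓ hx a b c, contracted_bianchi hUo hΓ hx a b c,
    covRicci_covSch hn hUo hΓ hx b a c, covRicci_covSch hn hUo hΓ hx c a b]
  simp only [cotton] at cycl ⊢
  linear_combination cycl
end

section
/- Let n ≥ 3. For any torsion-free affine connection Γ on U, the projective Cotton tensor satisfies the identity ∇_a Y_{bcd} + ∇_c Y_{abd} + ∇_b Y_{cad} = Σ_e (P_{ae} W^e_{dcb} + P_{be} W^e_{dac} + P_{ce} W^e_{dba}) for all indices a, b, c, d at every point of U. -/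
open scoped BigOperators

noncomputable section CottonAux

namespace CottonAux

variable {n : ℕ} {U : Set (Fin n → ℝ)} {f g : (Fin n → ℝ) → ℝ} {x : Fin n → ℝ}

lemma sm_diffAt (hUo : IsOpen U) (hf : ContDiffOn ℝ (⊤ : ℕ∞) f U) (hx : x ∈ U) :
    DifferentiableAt ℝ f x :=
  (hf.contDiffAt (hUo.mem_nhds hx)).differentiableAt (by simp)

lemma pd_sub (hf : DifferentiableAt ℝ f x) (hg : DifferentiableAt ℝ g x) (b : Fin n) :
    pd b (fun y => f y - g y) x = pd b f x - pd b g x := by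
  simp [pd, fderiv_fun_sub hf hg]

lemma pd_mul (hf : DifferentiableAt ℝ f x) (hg : DifferentiableAt ℝ g x) (b : Fin n) :
    pd b (fun y => f y * g y) x = pd b f x * g x + f x * pd b g x := by
  simp [pd, fderiv_fun_mul hf hg]; ring

lemma pd_sum {ι : Type*} {s : Finset ι} {A : ι → (Fin n → ℝ) → ℝ}
    (h : ∀ i ∈ s, DifferentiableAt ℝ (A i) x) (b : Fin n) :
    pd b (fun y => ∑ i ∈ s, A i y) x = ∑ i ∈ s, pd b (A i) x := by
  simp [pd, fderiv_fun_sum h]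

lemma contDiffOn_pd (hUo : IsOpen U) (hf : ContDiffOn ℝ (⊤ : ℕ∞) f U) (b : Fin n) :
    ContDiffOn ℝ (⊤ : ℕ∞) (pd b f) U := by
  have h1 : ContDiffOn ℝ (⊤ : ℕ∞) (fderiv ℝ f) U := hf.fderiv_of_isOpen hUo (by simp)
  exact h1.clm_apply contDiffOn_const

lemma pd_comm (hUo : IsOpen U) (hf : ContDiffOn ℝ (⊤ : ℕ∞) f U) (hx : x ∈ U) (a b : Fin n) :
    pd a (pd b f) x = pd b (pd a f) x := by
  have hca : ContDiffAt ℝ (⊤ : ℕ∞) f x := hf.contDiffAt (hUo.mem_nhds hx)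
  have hsym := hca.isSymmSndFDerivAt (by simp [minSmoothness_of_isRCLikeNormedField]; exact WithTop.coe_le_coe.mpr le_top)
  have hd : DifferentiableAt ℝ (fderiv ℝ f) x :=
    ((hf.fderiv_of_isOpen hUo (m := 1) (WithTop.coe_le_coe.mpr le_top)).contDiffAt (hUo.mem_nhds hx)).differentiableAt one_ne_zero
  have key : ∀ v w : Fin n → ℝ, fderiv ℝ (fun y => fderiv ℝ f y v) x w
      = fderiv ℝ (fderiv ℝ f) x w v := by
    intro v w
    rw [fderiv_clm_apply hd (differentiableAt_const v)]
    simp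
  simp only [pd]
  rw [show pd b f = (fun y => fderiv ℝ f y (Pi.single b 1)) from rfl,
      show pd a f = (fun y => fderiv ℝ f y (Pi.single a 1)) from rfl, key, key]
  exact hsym _ _

lemma pd_congr (hUo : IsOpen U) (hx : x ∈ U) (h : ∀ y ∈ U, f y = g y) (b : Fin n) :
    pd b f x = pd b g x := by
  have : f =ᶠ[nhds x] g := by
    filter_upwards [hUo.mem_nhds hx] with y hy using h y hy
  simp [pd, this.fderiv_eq]

variable {Γ : Fin n → Fin n → Fin n → (Fin n → ℝ) → ℝ}

lemma sm_curv (hUo : IsOpen U) (hΓ : ∀ a b c, ContDiffOn ℝ (⊤ : ℕ∞) (Γ a b c) U) (a b c d : Fin n) :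
    ContDiffOn ℝ (⊤ : ℕ∞) (curv Γ a b c d) U := by
  exact (((contDiffOn_pd hUo (hΓ a b d) c).sub (contDiffOn_pd hUo (hΓ a b c) d)).add
    (ContDiffOn.sum fun e _ => ((hΓ a e c).mul (hΓ e b d)).sub ((hΓ a e d).mul (hΓ e b c))))

lemma sm_ricci (hUo : IsOpen U) (hΓ : ∀ a b c, ContDiffOn ℝ (⊤ : ℕ∞) (Γ a b c) U) (b d : Fin n) :
    ContDiffOn ℝ (⊤ : ℕ∞) (ricci Γ b d) U :=
  ContDiffOn.sum fun a _ => sm_curv hUo hΓ a b a d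

lemma sm_schouten (hUo : IsOpen U) (hΓ : ∀ a b c, ContDiffOn ℝ (⊤ : ℕ∞) (Γ a b c) U) (a b : Fin n) :
    ContDiffOn ℝ (⊤ : ℕ∞) (schouten Γ a b) U := by
  exact (contDiffOn_const.mul (((sm_ricci hUo hΓ a b).add (sm_ricci hUo hΓ b a)).div_const 2)).sub
    (contDiffOn_const.mul (((sm_ricci hUo hΓ a b).sub (sm_ricci hUo hΓ b a)).div_const 2))

lemma sm_covS (hUo : IsOpen U) (hΓ : ∀ a b c, ContDiffOn ℝ (⊤ : ℕ∞) (Γ a b c) U) (a b c : Fin n) :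
    ContDiffOn ℝ (⊤ : ℕ∞) (covSchouten Γ a b c) U := by
  exact ((contDiffOn_pd hUo (sm_schouten hUo hΓ b c) a).sub
      (ContDiffOn.sum fun e _ => (hΓ e b a).mul (sm_schouten hUo hΓ e c))).sub
    (ContDiffOn.sum fun e _ => (hΓ e c a).mul (sm_schouten hUo hΓ b e))

end CottonAux

end CottonAux

noncomputable section CottonAux2
namespace CottonAux
open Finset

variable {n : ℕ} {U : Set (Fin n → ℝ)} {x : Fin n → ℝ}
variable {Γ : Fin n → Fin n → Fin n → (Fin n → ℝ) → ℝ}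

/-- Second covariant derivative `∇_a ∇_b P_{cd}` of the Schouten tensor. -/
def Tt (Γ : Fin n → Fin n → Fin n → (Fin n → ℝ) → ℝ) (a b c d : Fin n) (x : Fin n → ℝ) : ℝ :=
  pd a (covSchouten Γ b c d) x - (∑ e, Γ e b a x * covSchouten Γ e c d x)
    - (∑ e, Γ e c a x * covSchouten Γ b e d x) - (∑ e, Γ e d a x * covSchouten Γ b c e x)

lemma covCotton_eq (hUo : IsOpen U) (hΓ : ∀ a b c, ContDiffOn ℝ (⊤ : ℕ∞) (Γ a b c) U) (hx : x ∈ U)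
    (a b c d : Fin n) :
    covCotton Γ a b c d x = Tt Γ a b c d x - Tt Γ a c b d x := by
  have hd : ∀ b c d, DifferentiableAt ℝ (covSchouten Γ b c d) x :=
    fun b c d => sm_diffAt hUo (sm_covS hUo hΓ b c d) hx
  have h1 : ∀ b c d : Fin n, pd a (cotton Γ b c d) x
      = pd a (covSchouten Γ b c d) x - pd a (covSchouten Γ c b d) x :=
    fun b c d => pd_sub (hd b c d) (hd c b d) a
  simp only [covCotton, Tt, h1, cotton, mul_sub, Finset.sum_sub_distrib]
  ring

lemma pd_covS (hUo : IsOpen U) (hΓ : ∀ a b c, ContDiffOn ℝ (⊤ : ℕ∞) (Γ a b c) U) (hx : x ∈ U)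
    (a b c d : Fin n) :
    pd a (covSchouten Γ b c d) x =
      pd a (pd b (schouten Γ c d)) x
      - ∑ e, (pd a (Γ e c b) x * schouten Γ e d x + Γ e c b x * pd a (schouten Γ e d) x)
      - ∑ e, (pd a (Γ e d b) x * schouten Γ c e x + Γ e d b x * pd a (schouten Γ c e) x) := by
  have dP : ∀ c d, DifferentiableAt ℝ (schouten Γ c d) x :=
    fun c d => sm_diffAt hUo (sm_schouten hUo hΓ c d) hx
  have dΓ : ∀ e c b, DifferentiableAt ℝ (Γ e c b) x :=
    fun e c b => sm_diffAt hUo (hΓ e c b) hx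
  have dpdP : DifferentiableAt ℝ (pd b (schouten Γ c d)) x :=
    sm_diffAt hUo (contDiffOn_pd hUo (sm_schouten hUo hΓ c d) b) hx
  have dsum1 : DifferentiableAt ℝ (fun y => ∑ e, Γ e c b y * schouten Γ e d y) x :=
    sm_diffAt hUo (ContDiffOn.sum fun e _ => (hΓ e c b).mul (sm_schouten hUo hΓ e d)) hx
  have dsum2 : DifferentiableAt ℝ (fun y => ∑ e, Γ e d b y * schouten Γ c e y) x :=
    sm_diffAt hUo (ContDiffOn.sum fun e _ => (hΓ e d b).mul (sm_schouten hUo hΓ c e)) hx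
  calc pd a (covSchouten Γ b c d) x
      = pd a (fun y => (pd b (schouten Γ c d) y - ∑ e, Γ e c b y * schouten Γ e d y)
          - ∑ e, Γ e d b y * schouten Γ c e y) x := rfl
    _ = pd a (pd b (schouten Γ c d)) x
        - pd a (fun y => ∑ e, Γ e c b y * schouten Γ e d y) x
        - pd a (fun y => ∑ e, Γ e d b y * schouten Γ c e y) x := by
        rw [pd_sub (dpdP.fun_sub dsum1) dsum2, pd_sub dpdP dsum1]
    _ = pd a (pd b (schouten Γ c d)) x
        - ∑ e, pd a (fun y => Γ e c b y * schouten Γ e d y) x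
        - ∑ e, pd a (fun y => Γ e d b y * schouten Γ c e y) x := by
        rw [pd_sum (fun e _ => (dΓ e c b).fun_mul (dP e d)) a,
            pd_sum (fun e _ => (dΓ e d b).fun_mul (dP c e)) a]
    _ = _ := by
        rw [Finset.sum_congr rfl (fun e _ => pd_mul (dΓ e c b) (dP e d) a),
            Finset.sum_congr rfl (fun e _ => pd_mul (dΓ e d b) (dP c e) a)]

lemma curv_antisym (a b c d : Fin n) :
    curv Γ a b c d x + curv Γ a b d c x = 0 := by
  have h : (∑ e, (Γ a e c x * Γ e b d x - Γ a e d x * Γ e b c x))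
      + (∑ e, (Γ a e d x * Γ e b c x - Γ a e c x * Γ e b d x)) = 0 := by
    rw [← Finset.sum_add_distrib]
    exact Finset.sum_eq_zero fun e _ => by ring
  simp only [curv]
  linear_combination h

lemma curv_bianchi (hUo : IsOpen U) (hΓ : IsConn U Γ) (hx : x ∈ U) (a b c d : Fin n) :
    curv Γ a b c d x + curv Γ a c d b x + curv Γ a d b c x = 0 := by
  have hs := hΓ.2
  have hpd1 : pd d (Γ a c b) x = pd d (Γ a b c) x :=
    pd_congr hUo hx (fun y hy => hs a c b y hy) d
  have hpd2 : pd c (Γ a d b) x = pd c (Γ a b d) x :=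
    pd_congr hUo hx (fun y hy => hs a d b y hy) c
  have hpd3 : pd b (Γ a d c) x = pd b (Γ a c d) x :=
    pd_congr hUo hx (fun y hy => hs a d c y hy) b
  have hq : (∑ e, (Γ a e c x * Γ e b d x - Γ a e d x * Γ e b c x))
      + (∑ e, (Γ a e d x * Γ e c b x - Γ a e b x * Γ e c d x))
      + (∑ e, (Γ a e b x * Γ e d c x - Γ a e c x * Γ e d b x)) = 0 := by
    rw [← Finset.sum_add_distrib, ← Finset.sum_add_distrib]
    refine Finset.sum_eq_zero fun e _ => ?_
    rw [hs e b d x hx, hs e c b x hx, hs e d c x hx]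
    ring
  simp only [curv]
  rw [hpd1, hpd2, hpd3]
  linear_combination hq

end CottonAux
end CottonAux2

noncomputable section CottonAux3
namespace CottonAux
open Finset

lemma ricci_alg {ι : Type*} [Fintype ι]
    (G : ι → ι → ι → ℝ) (dG : ι → ι → ι → ι → ℝ)
    (P : ι → ι → ℝ) (dP : ι → ι → ι → ℝ) (DDP : ι → ι → ι → ι → ℝ)
    (SS : ι → ι → ι → ℝ) (CV : ι → ι → ι → ι → ℝ)
    (hG : ∀ e i j, G e i j = G e j i)
    (hDDP : ∀ a b c d, DDP a b c d = DDP b a c d)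
    (hSS : ∀ b c d, SS b c d = dP b c d - (∑ f, G f c b * P f d) - (∑ f, G f d b * P c f))
    (hCV : ∀ e c a b, CV e c a b
      = dG a e c b - dG b e c a + ∑ f, (G e f a * G f c b - G e f b * G f c a))
    (a b c d : ι) :
    (DDP a b c d - (∑ e, (dG a e c b * P e d + G e c b * dP a e d))
      - (∑ e, (dG a e d b * P c e + G e d b * dP a c e))
      - (∑ e, G e b a * SS e c d) - (∑ e, G e c a * SS b e d) - (∑ e, G e d a * SS b c e))
    - (DDP b a c d - (∑ e, (dG b e c a * P e d + G e c a * dP b e d))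
      - (∑ e, (dG b e d a * P c e + G e d a * dP b c e))
      - (∑ e, G e a b * SS e c d) - (∑ e, G e c b * SS a e d) - (∑ e, G e d b * SS a c e))
    = -(∑ e, CV e c a b * P e d) - (∑ e, CV e d a b * P c e) := by
  have h44 : (∑ e, G e a b * SS e c d) = ∑ e, G e b a * SS e c d :=
    Finset.sum_congr rfl fun e _ => by rw [hG e a b]
  have hEa : (∑ e, (dG a e c b * P e d + G e c b * dP a e d))
      = (∑ e, dG a e c b * P e d) + ∑ e, G e c b * dP a e d := Finset.sum_add_distrib
  have hEb : (∑ e, (dG a e d b * P c e + G e d b * dP a c e))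
      = (∑ e, dG a e d b * P c e) + ∑ e, G e d b * dP a c e := Finset.sum_add_distrib
  have hEa' : (∑ e, (dG b e c a * P e d + G e c a * dP b e d))
      = (∑ e, dG b e c a * P e d) + ∑ e, G e c a * dP b e d := Finset.sum_add_distrib
  have hEb' : (∑ e, (dG b e d a * P c e + G e d a * dP b c e))
      = (∑ e, dG b e d a * P c e) + ∑ e, G e d a * dP b c e := Finset.sum_add_distrib
  have h5 : (∑ e, G e c a * SS b e d)
      = (∑ e, G e c a * dP b e d) - (∑ e, ∑ f, G e c a * (G f e b * P f d))
        - (∑ e, ∑ f, G e c a * (G f d b * P e f)) := by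
    simp only [hSS, mul_sub, Finset.mul_sum, Finset.sum_sub_distrib]
  have h6 : (∑ e, G e d a * SS b c e)
      = (∑ e, G e d a * dP b c e) - (∑ e, ∑ f, G e d a * (G f c b * P f e))
        - (∑ e, ∑ f, G e d a * (G f e b * P c f)) := by
    simp only [hSS, mul_sub, Finset.mul_sum, Finset.sum_sub_distrib]
  have h5' : (∑ e, G e c b * SS a e d)
      = (∑ e, G e c b * dP a e d) - (∑ e, ∑ f, G e c b * (G f e a * P f d))
        - (∑ e, ∑ f, G e c b * (G f d a * P e f)) := by
    simp only [hSS, mul_sub, Finset.mul_sum, Finset.sum_sub_distrib]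
  have h6' : (∑ e, G e d b * SS a c e)
      = (∑ e, G e d b * dP a c e) - (∑ e, ∑ f, G e d b * (G f c a * P f e))
        - (∑ e, ∑ f, G e d b * (G f e a * P c f)) := by
    simp only [hSS, mul_sub, Finset.mul_sum, Finset.sum_sub_distrib]
  have hR1 : (∑ e, CV e c a b * P e d)
      = (∑ e, dG a e c b * P e d) - (∑ e, dG b e c a * P e d)
        + ((∑ e, ∑ f, G e f a * G f c b * P e d) - ∑ e, ∑ f, G e f b * G f c a * P e d) := by
    simp only [hCV, add_mul, sub_mul, Finset.sum_mul, Finset.sum_sub_distrib,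
      Finset.sum_add_distrib]
  have hR2 : (∑ e, CV e d a b * P c e)
      = (∑ e, dG a e d b * P c e) - (∑ e, dG b e d a * P c e)
        + ((∑ e, ∑ f, G e f a * G f d b * P c e) - ∑ e, ∑ f, G e f b * G f d a * P c e) := by
    simp only [hCV, add_mul, sub_mul, Finset.sum_mul, Finset.sum_sub_distrib,
      Finset.sum_add_distrib]
  have hw1 : (∑ e, ∑ f, G e f b * G f c a * P e d) = ∑ e, ∑ f, G e c a * (G f e b * P f d) := by
    rw [Finset.sum_comm]
    exact Finset.sum_congr rfl fun e _ => Finset.sum_congr rfl fun f _ => by ring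
  have hw2 : (∑ e, ∑ f, G e f a * G f c b * P e d) = ∑ e, ∑ f, G e c b * (G f e a * P f d) := by
    rw [Finset.sum_comm]
    exact Finset.sum_congr rfl fun e _ => Finset.sum_congr rfl fun f _ => by ring
  have hw3 : (∑ e, ∑ f, G e f b * G f d a * P c e) = ∑ e, ∑ f, G e d a * (G f e b * P c f) := by
    rw [Finset.sum_comm]
    exact Finset.sum_congr rfl fun e _ => Finset.sum_congr rfl fun f _ => by ring
  have hw4 : (∑ e, ∑ f, G e f a * G f d b * P c e) = ∑ e, ∑ f, G e d b * (G f e a * P c f) := by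
    rw [Finset.sum_comm]
    exact Finset.sum_congr rfl fun e _ => Finset.sum_congr rfl fun f _ => by ring
  have hw5 : (∑ e, ∑ f, G e d b * (G f c a * P f e)) = ∑ e, ∑ f, G e c a * (G f d b * P e f) := by
    rw [Finset.sum_comm]
    exact Finset.sum_congr rfl fun e _ => Finset.sum_congr rfl fun f _ => by ring
  have hw6 : (∑ e, ∑ f, G e c b * (G f d a * P e f)) = ∑ e, ∑ f, G e d a * (G f c b * P f e) := by
    rw [Finset.sum_comm]
    exact Finset.sum_congr rfl fun e _ => Finset.sum_congr rfl fun f _ => by ring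
  rw [hDDP a b c d]
  linear_combination hEa' + hEb' - hEa - hEb + h44 + h5' + h6' - h5 - h6 + hR1 + hR2
    - hw1 + hw2 - hw3 + hw4 - hw5 - hw6

end CottonAux
end CottonAux3

noncomputable section CottonAux4
namespace CottonAux
open Finset

variable {n : ℕ} {U : Set (Fin n → ℝ)} {x : Fin n → ℝ}
variable {Γ : Fin n → Fin n → Fin n → (Fin n → ℝ) → ℝ}

lemma ricci_id (hUo : IsOpen U) (hΓ : IsConn U Γ) (hx : x ∈ U) (a b c d : Fin n) :
    Tt Γ a b c d x - Tt Γ b a c d x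
      = -(∑ e, curv Γ e c a b x * schouten Γ e d x)
        - ∑ e, curv Γ e d a b x * schouten Γ c e x := by
  have h := ricci_alg (fun e i j => Γ e i j x) (fun a e i j => pd a (Γ e i j) x)
      (fun c d => schouten Γ c d x) (fun a c d => pd a (schouten Γ c d) x)
      (fun a b c d => pd a (pd b (schouten Γ c d)) x)
      (fun b c d => covSchouten Γ b c d x) (fun e c a b => curv Γ e c a b x)
      (fun e i j => hΓ.2 e i j x hx)
      (fun a b c d => pd_comm hUo (sm_schouten hUo hΓ.1 c d) hx a b)
      (fun b c d => rfl) (fun e c a b => rfl) a b c d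
  simp only [Tt]
  rw [pd_covS hUo hΓ.1 hx a b c d, pd_covS hUo hΓ.1 hx b a c d]
  exact h

end CottonAux
end CottonAux4

open CottonAux

/-- For `n ≥ 3`, the second Bianchi identity for the projective Cotton
tensor: `∇_a Y_{bcd} + ∇_c Y_{abd} + ∇_b Y_{cad}
  = Σ_e (P_{ae} W^e_{dcb} + P_{be} W^e_{dac} + P_{ce} W^e_{dba})`. -/
theorem cotton_bianchi {n : ℕ} (hn : 3 ≤ n)
    (U : Set (Fin n → ℝ)) (hUo : IsOpen U) (hUne : U.Nonempty)
    (Γ : Fin n → Fin n → Fin n → (Fin n → ℝ) → ℝ) (hΓ : IsConn U Γ) :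
    ∀ x ∈ U, ∀ a b c d : Fin n,
      covCotton Γ a b c d x + covCotton Γ c a b d x + covCotton Γ b c a d x
        = ∑ e, (schouten Γ a e x * weyl Γ e d c b x
            + schouten Γ b e x * weyl Γ e d a c x
            + schouten Γ c e x * weyl Γ e d b a x) := by
  intro x hx a b c d
  have hcc := fun a b c d => covCotton_eq (Γ := Γ) (x := x) hUo hΓ.1 hx a b c d
  have hri := fun a b c d => ricci_id (Γ := Γ) (x := x) hUo hΓ hx a b c d
  have hsplit : (∑ e, (schouten Γ a e x * weyl Γ e d c b x
        + schouten Γ b e x * weyl Γ e d a c x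
        + schouten Γ c e x * weyl Γ e d b a x))
      = (∑ e, schouten Γ a e x * weyl Γ e d c b x)
        + (∑ e, schouten Γ b e x * weyl Γ e d a c x)
        + (∑ e, schouten Γ c e x * weyl Γ e d b a x) := by
    rw [Finset.sum_add_distrib, Finset.sum_add_distrib]
  have hW1 : ∑ e, schouten Γ a e x * weyl Γ e d c b x
      = (∑ e, schouten Γ a e x * curv Γ e d c b x)
        - schouten Γ a c x * schouten Γ b d x + schouten Γ a b x * schouten Γ c d x
        + schouten Γ a d x * (schouten Γ c b x - schouten Γ b c x) := by
    simp only [weyl, kd, mul_ite, ite_mul, mul_one, mul_zero, zero_mul, one_mul, mul_add,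
      mul_sub, Finset.sum_add_distrib, Finset.sum_sub_distrib, Finset.sum_ite_eq',
      Finset.mem_univ, if_true]
    ring
  have hW2 : ∑ e, schouten Γ b e x * weyl Γ e d a c x
      = (∑ e, schouten Γ b e x * curv Γ e d a c x)
        - schouten Γ b a x * schouten Γ c d x + schouten Γ b c x * schouten Γ a d x
        + schouten Γ b d x * (schouten Γ a c x - schouten Γ c a x) := by
    simp only [weyl, kd, mul_ite, ite_mul, mul_one, mul_zero, zero_mul, one_mul, mul_add,
      mul_sub, Finset.sum_add_distrib, Finset.sum_sub_distrib, Finset.sum_ite_eq',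
      Finset.mem_univ, if_true]
    ring
  have hW3 : ∑ e, schouten Γ c e x * weyl Γ e d b a x
      = (∑ e, schouten Γ c e x * curv Γ e d b a x)
        - schouten Γ c b x * schouten Γ a d x + schouten Γ c a x * schouten Γ b d x
        + schouten Γ c d x * (schouten Γ b a x - schouten Γ a b x) := by
    simp only [weyl, kd, mul_ite, ite_mul, mul_one, mul_zero, zero_mul, one_mul, mul_add,
      mul_sub, Finset.sum_add_distrib, Finset.sum_sub_distrib, Finset.sum_ite_eq',
      Finset.mem_univ, if_true]
    ring
  have hA1 : ∑ e, schouten Γ a e x * curv Γ e d c b x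
      = -∑ e, curv Γ e d b c x * schouten Γ a e x := by
    rw [← Finset.sum_neg_distrib]
    exact Finset.sum_congr rfl fun e _ => by
      linear_combination (schouten Γ a e x) * curv_antisym (Γ := Γ) (x := x) e d c b
  have hA2 : ∑ e, schouten Γ b e x * curv Γ e d a c x
      = -∑ e, curv Γ e d c a x * schouten Γ b e x := by
    rw [← Finset.sum_neg_distrib]
    exact Finset.sum_congr rfl fun e _ => by
      linear_combination (schouten Γ b e x) * curv_antisym (Γ := Γ) (x := x) e d a c
  have hA3 : ∑ e, schouten Γ c e x * curv Γ e d b a x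
      = -∑ e, curv Γ e d a b x * schouten Γ c e x := by
    rw [← Finset.sum_neg_distrib]
    exact Finset.sum_congr rfl fun e _ => by
      linear_combination (schouten Γ c e x) * curv_antisym (Γ := Γ) (x := x) e d b a
  have hB : (∑ e, curv Γ e c a b x * schouten Γ e d x)
      + (∑ e, curv Γ e b c a x * schouten Γ e d x)
      + (∑ e, curv Γ e a b c x * schouten Γ e d x) = 0 := by
    rw [← Finset.sum_add_distrib, ← Finset.sum_add_distrib]
    refine Finset.sum_eq_zero fun e _ => ?_
    linear_combination (schouten Γ e d x) * curv_bianchi hUo hΓ hx e c a b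
  calc covCotton Γ a b c d x + covCotton Γ c a b d x + covCotton Γ b c a d x
      = (Tt Γ a b c d x - Tt Γ b a c d x) + (Tt Γ c a b d x - Tt Γ a c b d x)
        + (Tt Γ b c a d x - Tt Γ c b a d x) := by
        rw [hcc a b c d, hcc c a b d, hcc b c a d]; ring
    _ = (-(∑ e, curv Γ e c a b x * schouten Γ e d x)
          - ∑ e, curv Γ e d a b x * schouten Γ c e x)
        + (-(∑ e, curv Γ e b c a x * schouten Γ e d x)
          - ∑ e, curv Γ e d c a x * schouten Γ b e x)
        + (-(∑ e, curv Γ e a b c x * schouten Γ e d x)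
          - ∑ e, curv Γ e d b c x * schouten Γ a e x) := by
        rw [hri a b c d, hri c a b d, hri b c a d]
    _ = ∑ e, (schouten Γ a e x * weyl Γ e d c b x
          + schouten Γ b e x * weyl Γ e d a c x
          + schouten Γ c e x * weyl Γ e d b a x) := by
        rw [hsplit, hW1, hW2, hW3, hA1, hA2, hA3]
        linear_combination -hB
end
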